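/- arXiv:nlin/0308021 — 7 statements merged into one kernel-verified Lean document; each statement's English description precedes it below -/
import Mathlib

section
/- If λ = iν with ν real, ν not an integer multiple of π, solves the characteristic equation λ = (α+iβ)Δt − GΔt e^{−λ}, then α = (ν − βΔt)cos(ν)/(Δt sin(ν)) and G = (ν − βΔt)/(Δt sin(ν)). -/
open Complex

theorem stmt_4 (α β G Δt ν : ℝ) (hΔt : 0 < Δt)
    (hν : ¬∃ n : ℤ, ν = n * Real.pi)
    (hchar : (I * (ν : ℂ)) =
      ((α : ℂ) + I * (β : ℂ)) * (Δt : ℂ) - (G : ℂ) * (Δt : ℂ) * Complex.exp (-(I * (ν : ℂ)))) :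
    α = (ν - β * Δt) * Real.cos ν / (Δt * Real.sin ν) ∧
      G = (ν - β * Δt) / (Δt * Real.sin ν) := by
  have hsin : Real.sin ν ≠ 0 := by
    intro h
    exact hν (Real.sin_eq_zero_iff.mp h |>.imp fun n hn => hn.symm)
  have hΔt' : Δt ≠ 0 := ne_of_gt hΔt
  have hre := congrArg Complex.re hchar
  have him := congrArg Complex.im hchar
  simp [Complex.exp_re, Complex.exp_im, Complex.ext_iff] at hre him
  -- hre : 0 = α*Δt - G*Δt*cos ν (roughly); him : ν = β*Δt + G*Δt*sin ν
  have hG : G = (ν - β * Δt) / (Δt * Real.sin ν) := by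
    field_simp
    nlinarith [him]
  refine ⟨?_, hG⟩
  have hα : α = G * Real.cos ν := by
    nlinarith [hre]
  rw [hα, hG]
  field_simp
end

section
/- Let ν* ∈ ℝ satisfy sin(ν*) = βΔt − ν* with sin(ν*) ≠ 0. Then on the critical curve α(ν) = (ν − βΔt)cos(ν)/(Δt sin(ν)), G(ν) = (ν − βΔt)/(Δt sin(ν)), the point ν = ν* satisfies G(ν*) = −1/Δt and dα/dν(ν*) = dG/dν(ν*). -/
/-!
Dividing out the constant `Δt`, write `G = Δt⁻¹ f` and `α = Δt⁻¹ f cos` with `f ν = (ν - c) / sin ν`,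
`c = βΔt`. At the point `ν*` we have `ν* - c = -sin ν*`, so `f ν* = -1` and
`f' ν* = (1 + cos ν*) / sin ν*`; then `(f cos)' = f' cos - f sin = (cos + cos² + sin²) / sin = f'`.
-/

open Real

theorem hasDerivAt_sub_div_sin (c : ℝ) {x : ℝ} (hx : sin x ≠ 0) :
    HasDerivAt (fun ν => (ν - c) / sin ν) ((sin x - (x - c) * cos x) / sin x ^ 2) x := by
  simpa using ((hasDerivAt_id x).sub_const c).fun_div (hasDerivAt_sin x) hx

theorem deriv_sub_mul_cos_div_sin_eq_deriv_sub_div_sin {c x : ℝ}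
    (hx : sin x = c - x) (hsin : sin x ≠ 0) :
    deriv (fun ν => (ν - c) * cos ν / sin ν) x = deriv (fun ν => (ν - c) / sin ν) x := by
  have hf := hasDerivAt_sub_div_sin c hsin
  have hg : (fun ν => (ν - c) * cos ν / sin ν) = fun ν => (ν - c) / sin ν * cos ν := by
    funext ν
    ring
  rw [hg, (hf.fun_mul (hasDerivAt_cos x)).deriv, hf.deriv, show x - c = -sin x by linarith]
  field_simp
  linear_combination sin_sq_add_cos_sq x

theorem stmt_7_general (β Δt : ℝ) (ν' : ℝ)
    (hν' : Real.sin ν' = β * Δt - ν') (hsin : Real.sin ν' ≠ 0) :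
    (ν' - β * Δt) / (Δt * Real.sin ν') = -(1 / Δt) ∧
    deriv (fun ν => (ν - β * Δt) * Real.cos ν / (Δt * Real.sin ν)) ν' =
      deriv (fun ν => (ν - β * Δt) / (Δt * Real.sin ν)) ν' := by
  have hscale (u : ℝ → ℝ) : (fun ν => u ν / (Δt * sin ν)) = fun ν => Δt⁻¹ * (u ν / sin ν) := by
    funext ν
    ring
  constructor
  · rw [show ν' - β * Δt = -sin ν' by linarith, neg_div, div_mul_cancel_right₀ hsin, one_div]
  · rw [hscale (fun ν => (ν - β * Δt) * cos ν), hscale (fun ν => ν - β * Δt),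
      deriv_const_mul_field, deriv_const_mul_field,
      deriv_sub_mul_cos_div_sin_eq_deriv_sub_div_sin hν' hsin]

theorem stmt_7 (β Δt : ℝ) (hΔt : 0 < Δt) (ν' : ℝ)
    (hν' : Real.sin ν' = β * Δt - ν') (hsin : Real.sin ν' ≠ 0) :
    (ν' - β * Δt) / (Δt * Real.sin ν') = -(1 / Δt) ∧
    deriv (fun ν => (ν - β * Δt) * Real.cos ν / (Δt * Real.sin ν)) ν' =
      deriv (fun ν => (ν - β * Δt) / (Δt * Real.sin ν)) ν' :=
  stmt_7_general β Δt ν' hν' hsin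
end

section
/- If γ ≤ 0, c ≤ 0, and Δt > 0, then every solution λ = μ + iν (μ, ν ∈ ℝ) of the characteristic equation λ = Δt(c + γ + i·d) − γΔt e^{−λ} has μ ≤ 0; equivalently, there is no solution with strictly positive real part, and if c < 0 then every solution has μ < 0. -/
open Complex

theorem stmt_9 (γ c d Δt : ℝ) (hγ : γ ≤ 0) (hc : c ≤ 0) (hΔt : 0 < Δt) :
    ∀ μ ν : ℝ,
      ((μ : ℂ) + (ν : ℂ) * I) =
        (Δt : ℂ) * ((c : ℂ) + (γ : ℂ) + I * (d : ℂ))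
          - (γ : ℂ) * (Δt : ℂ) * Complex.exp (-((μ : ℂ) + (ν : ℂ) * I)) →
      μ ≤ 0 ∧ (c < 0 → μ < 0) := by
  intro μ ν h
  have hre := congrArg Complex.re h
  simp [Complex.exp_re] at hre
  have hcos : Real.cos ν ≤ 1 := Real.cos_le_one ν
  have hexp : 0 < Real.exp (-μ) := Real.exp_pos _
  have hle : μ ≤ 0 := by
    by_contra hpos
    push_neg at hpos
    have h1 : Real.exp (-μ) < 1 := by
      rw [Real.exp_lt_one_iff]; linarith
    have h2 : Real.exp (-μ) * Real.cos ν < 1 := by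
      nlinarith
    have h3 : γ * (Δt * (1 - Real.exp (-μ) * Real.cos ν)) ≤ 0 :=
      mul_nonpos_of_nonpos_of_nonneg hγ (mul_nonneg hΔt.le (by linarith))
    nlinarith [h3, mul_nonpos_of_nonneg_of_nonpos hΔt.le hc]
  refine ⟨hle, fun hc' => ?_⟩
  rcases lt_or_eq_of_le hle with h' | h'
  · exact h'
  · exfalso
    have h1 : Real.exp (-μ) ≤ 1 := by
      rw [Real.exp_le_one_iff]; linarith
    have h2 : Real.exp (-μ) * Real.cos ν ≤ 1 := by nlinarith
    have h3 : γ * (Δt * (1 - Real.exp (-μ) * Real.cos ν)) ≤ 0 :=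
      mul_nonpos_of_nonpos_of_nonneg hγ (mul_nonneg hΔt.le (by linarith))
    nlinarith [h3, mul_nonpos_of_nonneg_of_nonpos hΔt.le hc]
end

section
/- Fix b ∈ ℝ and Δt > 0 with bΔt ∉ πℤ, and let n ∈ ℤ be such that |bΔt − 2πn| < π. Define w(ν) = (ν − bΔt)(cos ν − 1)/sin ν on the open interval I between 2πn and bΔt. Then w(ν) > 0 for all ν in the interior of I, and w(ν) → 0 as ν approaches either endpoint of I. -/
/-!
Halving the angle, `(cos ν - 1) / sin ν = -tan (ν / 2)` (for every `ν`, thanks to the convention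
`x / 0 = 0` on both sides), so `w ν = -(ν - bΔt) tan (ν / 2)`. Since `|bΔt - 2πn| < π`, every `ν` between `2πn`
and `bΔt` has `ν / 2` within `π / 2` of `nπ`: there `tan (ν / 2)` is continuous, has the sign of
`ν - 2πn`, hence the sign opposite to `ν - bΔt`, which gives positivity. The factor
`-(ν - bΔt) tan (ν / 2)` vanishes at both endpoints, which gives the limits.
-/

open Real Set Filter Topology

namespace Real

theorem cos_sub_one_div_sin (x : ℝ) : (cos x - 1) / sin x = -tan (x / 2) := by
  obtain ⟨y, rfl⟩ : ∃ y, x = 2 * y := ⟨x / 2, by ring⟩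
  rw [mul_div_cancel_left₀ y two_ne_zero, cos_two_mul, sin_two_mul, tan_eq_sin_div_cos]
  rcases eq_or_ne (sin y) 0 with hs | hs
  · simp [hs]
  rcases eq_or_ne (cos y) 0 with hc | hc
  · simp [hc]
  field_simp
  linear_combination 2 * sin_sq_add_cos_sq y

theorem mul_tan_pos {x : ℝ} (hx0 : x ≠ 0) (hx : |x| < π / 2) : 0 < x * tan x := by
  rcases abs_lt.1 hx with ⟨hlo, hhi⟩
  rcases hx0.lt_or_gt with hneg | hpos
  · exact mul_pos_of_neg_of_neg hneg (tan_neg_of_neg_of_pi_div_two_lt hneg hlo)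
  · exact mul_pos hpos (tan_pos_of_pos_of_lt_pi_div_two hpos hhi)

theorem tan_half_eq_tan_half_sub_two_pi_mul (x : ℝ) (n : ℤ) :
    tan (x / 2) = tan ((x - 2 * π * n) / 2) := by
  rw [← tan_add_int_mul_pi ((x - 2 * π * n) / 2) n]
  ring_nf

theorem cos_half_ne_zero_of_abs_sub_two_pi_mul_lt {x : ℝ} {n : ℤ} (h : |x - 2 * π * n| < π) :
    cos (x / 2) ≠ 0 := by
  rcases abs_lt.1 h with ⟨hlo, hhi⟩
  rw [show x / 2 = (x - 2 * π * n) / 2 + n * π by ring, cos_add_int_mul_pi]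
  exact mul_ne_zero (zpow_ne_zero _ (by norm_num))
    (cos_pos_of_mem_Ioo ⟨by linarith, by linarith⟩).ne'

end Real

theorem sub_mul_sub_neg_and_abs_sub_lt_of_mem_Ioo_min_max {a c x : ℝ}
    (hx : x ∈ Ioo (min a c) (max a c)) : (x - a) * (x - c) < 0 ∧ |x - a| < |c - a| := by
  rcases le_total a c with hac | hca
  · rw [min_eq_left hac, max_eq_right hac] at hx
    rw [abs_of_pos (sub_pos.2 hx.1), abs_of_nonneg (sub_nonneg.2 hac)]
    exact ⟨mul_neg_of_pos_of_neg (by linarith [hx.1]) (by linarith [hx.2]), by linarith [hx.2]⟩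
  · rw [min_eq_right hca, max_eq_left hca] at hx
    rw [abs_of_neg (sub_neg.2 hx.2), abs_of_nonpos (sub_nonpos.2 hca)]
    exact ⟨mul_neg_of_neg_of_pos (by linarith [hx.2]) (by linarith [hx.1]), by linarith [hx.1]⟩

section

variable {c : ℝ} {n : ℤ}

theorem neg_sub_mul_tan_half_pos (hc : |c - 2 * π * n| < π) {x : ℝ}
    (hx : x ∈ Ioo (min (2 * π * n) c) (max (2 * π * n) c)) : 0 < -(x - c) * tan (x / 2) := by
  obtain ⟨hsign, hdist⟩ := sub_mul_sub_neg_and_abs_sub_lt_of_mem_Ioo_min_max hx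
  set t := (x - 2 * π * n) / 2 with ht
  have ht0 : t ≠ 0 := by
    rintro h0
    simp [show x - 2 * π * n = 0 by linarith] at hsign
  have htan : 0 < t * tan t :=
    mul_tan_pos ht0 (by rw [ht, abs_div, abs_two]; linarith)
  rw [tan_half_eq_tan_half_sub_two_pi_mul x n, ← ht]
  have hprod : t ^ 2 * (-(x - c) * tan t) = -((x - 2 * π * n) * (x - c) / 2) * (t * tan t) := by
    rw [ht]; ring
  refine pos_of_mul_pos_right (a := t ^ 2) ?_ (sq_nonneg t)
  rw [hprod]
  exact mul_pos (by linarith) htan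

theorem tendsto_neg_sub_mul_tan_half_nhdsWithin (hc : |c - 2 * π * n| < π) {p : ℝ}
    (hp : p = 2 * π * n ∨ p = c) (s : Set ℝ) :
    Tendsto (fun x => -(x - c) * tan (x / 2)) (𝓝[s] p) (𝓝 0) := by
  have hp' : |p - 2 * π * n| < π := by
    rcases hp with rfl | rfl
    · simpa using pi_pos
    · exact hc
  have hzero : -(p - c) * tan (p / 2) = 0 := by
    rcases hp with rfl | rfl
    · rw [show 2 * π * n / 2 = n * π by ring, tan_int_mul_pi, mul_zero]
    · rw [sub_self, neg_zero, zero_mul]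
  have hcont : ContinuousAt (fun x => -(x - c) * tan (x / 2)) p :=
    ((continuousAt_id.sub continuousAt_const).neg).mul
      ((continuousAt_tan.2 (cos_half_ne_zero_of_abs_sub_two_pi_mul_lt hp')).comp
        (f := fun x : ℝ => x / 2) (continuousAt_id.div_const 2))
  exact hzero ▸ hcont.continuousWithinAt.tendsto

end

theorem stmt_11_general (b Δt : ℝ)
    (n : ℤ) (hn : |b * Δt - 2 * Real.pi * n| < Real.pi)
    (w : ℝ → ℝ)
    (hw : ∀ ν, w ν = (ν - b * Δt) * (Real.cos ν - 1) / Real.sin ν)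
    (lo hi : ℝ) (hlo : lo = min (2 * Real.pi * n) (b * Δt))
    (hhi : hi = max (2 * Real.pi * n) (b * Δt)) :
    (∀ ν ∈ Set.Ioo lo hi, 0 < w ν) ∧
    Filter.Tendsto w (nhdsWithin lo (Set.Ioo lo hi)) (nhds 0) ∧
    Filter.Tendsto w (nhdsWithin hi (Set.Ioo lo hi)) (nhds 0) := by
  have hw' : w = fun ν => -(ν - b * Δt) * tan (ν / 2) := by
    funext ν
    rw [hw, mul_div_assoc, cos_sub_one_div_sin]
    ring
  subst hlo hhi hw'
  exact ⟨fun ν hν => neg_sub_mul_tan_half_pos hn hν,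
    tendsto_neg_sub_mul_tan_half_nhdsWithin hn (min_choice _ _) _,
    tendsto_neg_sub_mul_tan_half_nhdsWithin hn (max_choice _ _) _⟩

theorem stmt_11 (b Δt : ℝ) (hΔt : 0 < Δt)
    (hbt : ¬∃ k : ℤ, b * Δt = k * Real.pi)
    (n : ℤ) (hn : |b * Δt - 2 * Real.pi * n| < Real.pi)
    (w : ℝ → ℝ)
    (hw : ∀ ν, w ν = (ν - b * Δt) * (Real.cos ν - 1) / Real.sin ν)
    (lo hi : ℝ) (hlo : lo = min (2 * Real.pi * n) (b * Δt))
    (hhi : hi = max (2 * Real.pi * n) (b * Δt)) :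
    (∀ ν ∈ Set.Ioo lo hi, 0 < w ν) ∧
    Filter.Tendsto w (nhdsWithin lo (Set.Ioo lo hi)) (nhds 0) ∧
    Filter.Tendsto w (nhdsWithin hi (Set.Ioo lo hi)) (nhds 0) :=
  stmt_11_general b Δt n hn w hw lo hi hlo hhi
end

section
/- Fix b ∈ ℝ and Δt > 0 with bΔt ∉ πℤ, let n ∈ ℤ satisfy |bΔt − 2πn| < π, and let I be the open interval with endpoints 2πn and bΔt. Then the derivative of w(ν) = (ν − bΔt)(cos ν − 1)/sin ν equals (bΔt − ν − sin ν)/(1 + cos ν) on I, and there is a unique ν* ∈ I with sin(ν*) = bΔt − ν*; w is increasing on the part of I below ν* and decreasing above ν*, so w attains its unique maximum w_max = 1 − cos(ν*) at ν*. -/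
/-!
Write `a = 2πn` and `c = bΔt`. On the window `|ν - a| < π` we have `1 + cos ν > 0`, and `sin ν`
has the sign of `ν - a`. The derivative formula reduces to `sin² + cos² = 1`, and the sign of
`w'` is that of `c - (ν + sin ν)`. Since `ν ↦ ν + sin ν` is strictly increasing on the window,
the zero `ν*` of this numerator is unique; it exists by the intermediate value theorem, the
numerator being `c - a` at `a` and `-sin c` at `c`. It separates the part of `I` where `w`
increases from the part where it decreases, and `ν* - c = -sin ν*` turns `w ν*` into
`1 - cos ν*`.
-/

open Real Set

lemma sin_eq_sin_sub_two_pi_mul (x : ℝ) (n : ℤ) : sin x = sin (x - 2 * π * n) := by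
  rw [← sin_sub_int_mul_two_pi x n]; ring_nf

lemma cos_eq_cos_sub_two_pi_mul (x : ℝ) (n : ℤ) : cos x = cos (x - 2 * π * n) := by
  rw [← cos_sub_int_mul_two_pi x n]; ring_nf

lemma sub_two_pi_mul_mul_sin_pos {x : ℝ} (n : ℤ) (hx : x ≠ 2 * π * n)
    (h : |x - 2 * π * n| < π) : 0 < (x - 2 * π * n) * sin x := by
  rw [sin_eq_sin_sub_two_pi_mul x n]
  obtain ⟨h₁, h₂⟩ := abs_lt.mp h
  rcases (sub_ne_zero.mpr hx).lt_or_gt with hneg | hpos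
  · exact mul_pos_of_neg_of_neg hneg (sin_neg_of_neg_of_neg_pi_lt hneg h₁)
  · exact mul_pos hpos (sin_pos_of_pos_of_lt_pi hpos h₂)

lemma one_add_cos_pos_of_abs_sub_two_pi_mul_lt {x : ℝ} (n : ℤ) (h : |x - 2 * π * n| < π) :
    0 < 1 + cos x := by
  obtain ⟨h₁, h₂⟩ := abs_lt.mp h
  have hhalf : 0 < cos ((x - 2 * π * n) / 2) := cos_pos_of_mem_Ioo ⟨by linarith, by linarith⟩
  have hsq := cos_sq ((x - 2 * π * n) / 2)
  rw [mul_div_cancel₀ _ two_ne_zero, ← cos_eq_cos_sub_two_pi_mul] at hsq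
  nlinarith [pow_pos hhalf 2]

lemma strictMonoOn_add_sin (n : ℤ) :
    StrictMonoOn (fun x ↦ x + sin x) (Icc (2 * π * n - π) (2 * π * n + π)) := by
  refine strictMonoOn_of_hasDerivWithinAt_pos (convex_Icc _ _) (by fun_prop)
    (fun x _ ↦ ((hasDerivAt_id x).add (hasDerivAt_sin x)).hasDerivWithinAt) fun x hx ↦ ?_
  rw [interior_Icc] at hx
  exact one_add_cos_pos_of_abs_sub_two_pi_mul_lt n
    (abs_sub_lt_iff.mpr ⟨by linarith [hx.2], by linarith [hx.1]⟩)

lemma hasDerivAt_sub_mul_cos_sub_one_div_sin {c x : ℝ} (hs : sin x ≠ 0) (hc : 1 + cos x ≠ 0) :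
    HasDerivAt (fun y ↦ (y - c) * (cos y - 1) / sin y) ((c - x - sin x) / (1 + cos x)) x := by
  have hnum : HasDerivAt (fun y ↦ (y - c) * (cos y - 1))
      (1 * (cos x - 1) + (x - c) * -sin x) x :=
    ((hasDerivAt_id' x).sub_const c).mul ((hasDerivAt_cos x).sub_const 1)
  refine (hnum.div (hasDerivAt_sin x) hs).congr_deriv ?_
  field_simp
  linear_combination (sin x - (x - c) * cos x) * sin_sq_add_cos_sq x

lemma sub_mul_cos_sub_one_div_sin_of_sin_eq {c x : ℝ} (h : sin x = c - x) (hs : sin x ≠ 0) :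
    (x - c) * (cos x - 1) / sin x = 1 - cos x := by
  rw [show x - c = -sin x by linarith]
  field_simp
  ring

lemma ne_and_abs_sub_lt_of_mem_Ioo_min_max {a b x : ℝ} (hx : x ∈ Ioo (min a b) (max a b)) :
    x ≠ a ∧ |x - a| < |b - a| := by
  rcases le_total a b with h | h
  · rw [min_eq_left h, max_eq_right h] at hx
    rw [abs_of_pos (sub_pos.2 hx.1), abs_of_nonneg (sub_nonneg.2 h)]
    exact ⟨hx.1.ne', by linarith [hx.2]⟩
  · rw [min_eq_right h, max_eq_left h] at hx
    rw [abs_of_neg (sub_neg.2 hx.2), abs_of_nonpos (sub_nonpos.2 h)]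
    exact ⟨hx.2.ne, by linarith [hx.1]⟩

lemma exists_mem_Ioo_min_max_eq_zero {f : ℝ → ℝ} {a b : ℝ} (hf : ContinuousOn f (uIcc a b))
    (h : f a * f b < 0) : ∃ x ∈ Ioo (min a b) (max a b), f x = 0 := by
  have h0 : (0 : ℝ) ∈ uIcc (f a) (f b) := by
    rcases mul_neg_iff.mp h with ⟨ha, hb⟩ | ⟨ha, hb⟩
    · exact mem_uIcc.2 (Or.inr ⟨hb.le, ha.le⟩)
    · exact mem_uIcc.2 (Or.inl ⟨ha.le, hb.le⟩)
  obtain ⟨x, hx, hfx⟩ := intermediate_value_uIcc hf h0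
  have hxa : x ≠ a := by rintro rfl; simp [hfx] at h
  have hxb : x ≠ b := by rintro rfl; simp [hfx] at h
  refine ⟨x, ⟨hx.1.lt_of_ne ?_, hx.2.lt_of_ne ?_⟩, hfx⟩
  · rcases min_choice a b with hm | hm <;> rw [hm] <;> exact Ne.symm ‹_›
  · rcases max_choice a b with hm | hm <;> rw [hm] <;> assumption

section Extremum

variable {f f' : ℝ → ℝ} {s : Set ℝ} {x₀ : ℝ}

lemma strictMonoOn_inter_Iic_of_hasDerivAt (hs : Convex ℝ s) (hso : IsOpen s)
    (hf : ∀ x ∈ s, HasDerivAt f (f' x) x) (hpos : ∀ x ∈ s, x < x₀ → 0 < f' x) :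
    StrictMonoOn f (s ∩ Iic x₀) := by
  have hint : interior (s ∩ Iic x₀) = s ∩ Iio x₀ := by
    rw [interior_inter, hso.interior_eq, interior_Iic]
  refine strictMonoOn_of_hasDerivWithinAt_pos (hs.inter (convex_Iic x₀))
    (fun x hx ↦ (hf x hx.1).continuousAt.continuousWithinAt)
    (fun x hx ↦ (hf x (hint ▸ hx).1).hasDerivWithinAt) fun x hx ↦ ?_
  rw [hint] at hx
  exact hpos x hx.1 hx.2

lemma strictAntiOn_inter_Ici_of_hasDerivAt (hs : Convex ℝ s) (hso : IsOpen s)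
    (hf : ∀ x ∈ s, HasDerivAt f (f' x) x) (hneg : ∀ x ∈ s, x₀ < x → f' x < 0) :
    StrictAntiOn f (s ∩ Ici x₀) := by
  have hint : interior (s ∩ Ici x₀) = s ∩ Ioi x₀ := by
    rw [interior_inter, hso.interior_eq, interior_Ici]
  refine strictAntiOn_of_hasDerivWithinAt_neg (hs.inter (convex_Ici x₀))
    (fun x hx ↦ (hf x hx.1).continuousAt.continuousWithinAt)
    (fun x hx ↦ (hf x (hint ▸ hx).1).hasDerivWithinAt) fun x hx ↦ ?_
  rw [hint] at hx
  exact hneg x hx.1 hx.2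

lemma isMaxOn_of_monotoneOn_inter_Iic_of_antitoneOn_inter_Ici
    (h₀ : MonotoneOn f (s ∩ Iic x₀)) (h₁ : AntitoneOn f (s ∩ Ici x₀)) (hx₀ : x₀ ∈ s) :
    IsMaxOn f s x₀ := by
  intro x hx
  rcases le_total x x₀ with h | h
  · exact h₀ ⟨hx, h⟩ ⟨hx₀, self_mem_Iic⟩ h
  · exact h₁ ⟨hx₀, self_mem_Ici⟩ ⟨hx, h⟩ h

end Extremum

theorem stmt_12_general (b Δt : ℝ)
    (hbt : ¬∃ k : ℤ, b * Δt = k * Real.pi)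
    (n : ℤ) (hn : |b * Δt - 2 * Real.pi * n| < Real.pi)
    (w : ℝ → ℝ)
    (hw : ∀ ν, w ν = (ν - b * Δt) * (Real.cos ν - 1) / Real.sin ν)
    (lo hi : ℝ) (hlo : lo = min (2 * Real.pi * n) (b * Δt))
    (hhi : hi = max (2 * Real.pi * n) (b * Δt)) :
    (∀ ν ∈ Set.Ioo lo hi,
        deriv w ν = (b * Δt - ν - Real.sin ν) / (1 + Real.cos ν)) ∧
    ∃ ν' ∈ Set.Ioo lo hi,
      Real.sin ν' = b * Δt - ν' ∧
      (∀ ν'' ∈ Set.Ioo lo hi, Real.sin ν'' = b * Δt - ν'' → ν'' = ν') ∧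
      StrictMonoOn w (Set.Ioo lo hi ∩ Set.Iic ν') ∧
      StrictAntiOn w (Set.Ioo lo hi ∩ Set.Ici ν') ∧
      w ν' = 1 - Real.cos ν' ∧
      (∀ ν ∈ Set.Ioo lo hi, w ν ≤ 1 - Real.cos ν') := by
  set c := b * Δt
  set a := 2 * π * n
  subst hlo hhi
  obtain rfl : w = fun ν ↦ (ν - c) * (cos ν - 1) / sin ν := funext hw
  have hca : c ≠ a := fun h ↦ hbt ⟨2 * n, by push_cast; rw [h]; ring⟩
  have hI (ν) (hν : ν ∈ Ioo (min a c) (max a c)) : ν ≠ a ∧ |ν - a| < π :=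
    (ne_and_abs_sub_lt_of_mem_Ioo_min_max hν).imp_right (·.trans hn)
  have hcos (ν) (hν : ν ∈ Ioo (min a c) (max a c)) : 0 < 1 + cos ν :=
    one_add_cos_pos_of_abs_sub_two_pi_mul_lt n (hI ν hν).2
  have hsin (ν) (hν : ν ∈ Ioo (min a c) (max a c)) : sin ν ≠ 0 :=
    right_ne_zero_of_mul (sub_two_pi_mul_mul_sin_pos n (hI ν hν).1 (hI ν hν).2).ne'
  have hderiv (ν) (hν : ν ∈ Ioo (min a c) (max a c)) :=
    hasDerivAt_sub_mul_cos_sub_one_div_sin (c := c) (hsin ν hν) (hcos ν hν).ne'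
  have hφ : StrictMonoOn (fun x ↦ x + sin x) (Ioo (min a c) (max a c)) :=
    (strictMonoOn_add_sin n).mono fun ν hν ↦
      mem_Icc_iff_abs_le.1 ((abs_sub_comm a ν).trans_le (hI ν hν).2.le)
  have hsin_a : sin a = 0 := by
    rw [show a = (2 * n : ℤ) * π by push_cast; ring, sin_int_mul_pi]
  obtain ⟨ν', hν'I, hν'⟩ := exists_mem_Ioo_min_max_eq_zero (f := fun x ↦ c - x - sin x)
    (a := a) (b := c) (by fun_prop) (by simpa [hsin_a] using sub_two_pi_mul_mul_sin_pos n hca hn)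
  have hsin' : sin ν' = c - ν' := by linarith only [hν']
  have hval := sub_mul_cos_sub_one_div_sin_of_sin_eq hsin' (hsin ν' hν'I)
  have hmono := strictMonoOn_inter_Iic_of_hasDerivAt (convex_Ioo _ _) isOpen_Ioo hderiv
    fun ν hν hlt ↦ div_pos (by linarith [hφ hν hν'I hlt]) (hcos ν hν)
  have hanti := strictAntiOn_inter_Ici_of_hasDerivAt (convex_Ioo _ _) isOpen_Ioo hderiv
    fun ν hν hlt ↦ div_neg_of_neg_of_pos (by linarith [hφ hν'I hν hlt]) (hcos ν hν)
  have hmax := isMaxOn_of_monotoneOn_inter_Iic_of_antitoneOn_inter_Ici hmono.monotoneOn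
    hanti.antitoneOn hν'I
  refine ⟨fun ν hν ↦ (hderiv ν hν).deriv, ν', hν'I, hsin', fun ν hν hsinν ↦ ?_, hmono, hanti,
    hval, fun ν hν ↦ hval ▸ hmax hν⟩
  exact hφ.injOn hν hν'I (show ν + sin ν = ν' + sin ν' by linarith)

theorem stmt_12 (b Δt : ℝ) (hΔt : 0 < Δt)
    (hbt : ¬∃ k : ℤ, b * Δt = k * Real.pi)
    (n : ℤ) (hn : |b * Δt - 2 * Real.pi * n| < Real.pi)
    (w : ℝ → ℝ)
    (hw : ∀ ν, w ν = (ν - b * Δt) * (Real.cos ν - 1) / Real.sin ν)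
    (lo hi : ℝ) (hlo : lo = min (2 * Real.pi * n) (b * Δt))
    (hhi : hi = max (2 * Real.pi * n) (b * Δt)) :
    (∀ ν ∈ Set.Ioo lo hi,
        deriv w ν = (b * Δt - ν - Real.sin ν) / (1 + Real.cos ν)) ∧
    ∃ ν' ∈ Set.Ioo lo hi,
      Real.sin ν' = b * Δt - ν' ∧
      (∀ ν'' ∈ Set.Ioo lo hi, Real.sin ν'' = b * Δt - ν'' → ν'' = ν') ∧
      StrictMonoOn w (Set.Ioo lo hi ∩ Set.Iic ν') ∧
      StrictAntiOn w (Set.Ioo lo hi ∩ Set.Ici ν') ∧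
      w ν' = 1 - Real.cos ν' ∧
      (∀ ν ∈ Set.Ioo lo hi, w ν ≤ 1 - Real.cos ν') :=
  stmt_12_general b Δt hbt n hn w hw lo hi hlo hhi
end

section
/- Fix b ∈ ℝ, Δt > 0 with bΔt = (2n+1)π for some integer n. Then w(ν) = (ν − bΔt)(cos ν − 1)/sin ν, defined on (2nπ, (2n+1)π), satisfies w(2(2n+1)π − ν) = w(ν) wherever both sides are defined, w(ν) → 0 as ν → 2nπ⁺, w(ν) → 2 as ν → (2n+1)π⁻, and w is strictly increasing on (2nπ, (2n+1)π). -/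
/-!
Put `c = (2n+1)π` and `t = c - ν`. Since `cos c = -1`, the half-angle formula
`(1 + cos t) / sin t = cot (t/2)` turns `w ν` into `t * cot (t/2)`, an even function of `t`.
Its derivative `(sin t - t) / (2 sin² (t/2))` is negative on `(0, 2π)`, so it decreases there,
which makes `w` increase in `ν`; at `t = π` it vanishes. At `ν = c` the original formula is
`(cos ν - 1)` divided by a slope of `sin` at `c`, whence the limit `(cos c - 1) / cos c = 2`.
-/

open Real Set Filter Topology

namespace Real

lemma hasDerivAt_cot {x : ℝ} (hx : sin x ≠ 0) : HasDerivAt cot (-1 / sin x ^ 2) x := by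
  have h := (hasDerivAt_cos x).fun_div (hasDerivAt_sin x) hx
  simp only [← cot_eq_cos_div_sin] at h
  refine h.congr_deriv ?_
  rw [← sin_sq_add_cos_sq x]
  ring

-- Also at the zeros of `sin`, where both sides are `0` by the convention `x / 0 = 0`.
lemma one_add_cos_div_sin (t : ℝ) : (1 + cos t) / sin t = cot (t / 2) := by
  obtain ⟨x, rfl⟩ : ∃ x, t = 2 * x := ⟨t / 2, by ring⟩
  rw [mul_div_cancel_left₀ x two_ne_zero, cot_eq_cos_div_sin, sin_two_mul, cos_two_mul]
  rcases eq_or_ne (cos x) 0 with h | h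
  · simp [h]
  · rw [show 1 + (2 * cos x ^ 2 - 1) = cos x * (2 * cos x) by ring,
      show 2 * sin x * cos x = sin x * (2 * cos x) by ring,
      mul_div_mul_right _ _ (mul_ne_zero two_ne_zero h)]

lemma sub_mul_cos_sub_one_div_sin_eq {c : ℝ} (hc : cos c = -1) (ν : ℝ) :
    (ν - c) * (cos ν - 1) / sin ν = (c - ν) * cot ((c - ν) / 2) := by
  have hs : sin c = 0 := sin_eq_zero_iff_cos_eq.mpr (Or.inr hc)
  obtain ⟨t, rfl⟩ : ∃ t, ν = c - t := ⟨c - ν, by ring⟩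
  rw [cos_sub, sin_sub, hc, hs, sub_sub_cancel, ← one_add_cos_div_sin]
  ring

lemma neg_mul_cot_neg_half (t : ℝ) : -t * cot (-t / 2) = t * cot (t / 2) := by
  rw [neg_div, cot_eq_cos_div_sin, cot_eq_cos_div_sin, cos_neg, sin_neg, div_neg]
  ring

lemma hasDerivAt_mul_cot_half {t : ℝ} (ht : sin (t / 2) ≠ 0) :
    HasDerivAt (fun t => t * cot (t / 2)) ((sin t - t) / (2 * sin (t / 2) ^ 2)) t := by
  have h := (hasDerivAt_id t).fun_mul
    ((hasDerivAt_cot ht).comp t ((hasDerivAt_id t).div_const 2))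
  refine h.congr_deriv ?_
  simp only [id, Function.comp_apply]
  rw [cot_eq_cos_div_sin, show sin t = 2 * sin (t / 2) * cos (t / 2) by
    rw [← sin_two_mul, mul_div_cancel₀ t two_ne_zero]]
  field_simp
  ring

lemma strictAntiOn_mul_cot_half : StrictAntiOn (fun t => t * cot (t / 2)) (Ioo 0 (2 * π)) := by
  have hsin : ∀ t ∈ Ioo 0 (2 * π), 0 < sin (t / 2) := fun t ht =>
    sin_pos_of_pos_of_lt_pi (by linarith [ht.1]) (by linarith [ht.2])
  refine strictAntiOn_of_deriv_neg (convex_Ioo 0 (2 * π)) ?_ fun t ht => ?_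
  · exact fun t ht => (hasDerivAt_mul_cot_half (hsin t ht).ne').continuousAt.continuousWithinAt
  · rw [interior_Ioo] at ht
    rw [(hasDerivAt_mul_cot_half (hsin t ht).ne').deriv]
    exact div_neg_of_neg_of_pos (by linarith [sin_lt ht.1]) (by positivity [hsin t ht])

lemma tendsto_mul_cot_half_pi : Tendsto (fun t => t * cot (t / 2)) (𝓝 π) (𝓝 0) := by
  have h := (hasDerivAt_mul_cot_half (by simp : sin (π / 2) ≠ 0)).continuousAt.tendsto
  simpa [cot_eq_cos_div_sin] using h

lemma tendsto_sub_mul_cos_sub_one_div_sin {c : ℝ} (hc : sin c = 0) :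
    Tendsto (fun ν => (ν - c) * (cos ν - 1) / sin ν) (𝓝[≠] c) (𝓝 ((cos c - 1) / cos c)) := by
  have hcos : cos c ≠ 0 := fun h => by simpa [hc, h] using sin_sq_add_cos_sq c
  have hslope : Tendsto (slope sin c) (𝓝[≠] c) (𝓝 (cos c)) :=
    hasDerivAt_iff_tendsto_slope.mp (hasDerivAt_sin c)
  have hnum : Tendsto (fun ν => cos ν - 1) (𝓝[≠] c) (𝓝 (cos c - 1)) :=
    ((continuous_cos.sub continuous_const).tendsto c).mono_left nhdsWithin_le_nhds
  refine (hnum.div hslope hcos).congr fun ν => ?_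
  rw [Pi.div_apply, slope_def_field, hc, sub_zero, div_div_eq_mul_div, mul_comm]

end Real

theorem stmt_16_general (b Δt : ℝ) (n : ℤ)
    (hbt : b * Δt = (2 * n + 1) * Real.pi)
    (w : ℝ → ℝ)
    (hw : ∀ ν, w ν = (ν - b * Δt) * (Real.cos ν - 1) / Real.sin ν) :
    (∀ ν ∈ Set.Ioo (2 * n * Real.pi) ((2 * n + 1) * Real.pi),
        w (2 * (2 * n + 1) * Real.pi - ν) = w ν) ∧
    Filter.Tendsto w
      (nhdsWithin (2 * n * Real.pi) (Set.Ioi (2 * n * Real.pi))) (nhds 0) ∧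
    Filter.Tendsto w
      (nhdsWithin ((2 * n + 1) * Real.pi) (Set.Iio ((2 * n + 1) * Real.pi))) (nhds 2) ∧
    StrictMonoOn w (Set.Ioo (2 * n * Real.pi) ((2 * n + 1) * Real.pi)) := by
  set c := (2 * n + 1 : ℝ) * π
  have hcos : cos c = -1 := by
    rw [show c = n * (2 * π) + π by ring]
    exact cos_int_mul_two_pi_add_pi n
  have hw₀ : w = fun ν => (ν - c) * (cos ν - 1) / sin ν := funext fun ν => by rw [hw, hbt]
  have hw₁ : w = fun ν => (c - ν) * cot ((c - ν) / 2) :=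
    hw₀.trans (funext (sub_mul_cos_sub_one_div_sin_eq hcos))
  have ha : 2 * n * π = c - π := by ring
  refine ⟨fun ν _ => ?_, ?_, ?_, ?_⟩
  · simp only [hw₁]
    rw [show c - (2 * (2 * n + 1) * π - ν) = -(c - ν) by ring, neg_mul_cot_neg_half]
  · rw [hw₁, ha]
    have hπ : Tendsto (fun ν => c - ν) (𝓝 (c - π)) (𝓝 π) := by
      simpa using (continuous_sub_left c).tendsto (c - π)
    exact (tendsto_mul_cot_half_pi.comp hπ).mono_left nhdsWithin_le_nhds
  · have h := tendsto_sub_mul_cos_sub_one_div_sin (sin_eq_zero_iff_cos_eq.mpr (Or.inr hcos))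
    rw [hcos] at h
    norm_num at h
    rw [hw₀]
    exact h.mono_left (nhdsWithin_mono c fun ν hν => ne_of_lt hν)
  · rw [hw₁, ha]
    intro x hx y hy hxy
    have := pi_pos
    exact strictAntiOn_mul_cot_half ⟨by linarith [hy.2], by linarith [hy.1]⟩
      ⟨by linarith [hx.2], by linarith [hx.1]⟩ (by linarith)

theorem stmt_16 (b Δt : ℝ) (hΔt : 0 < Δt) (n : ℤ)
    (hbt : b * Δt = (2 * n + 1) * Real.pi)
    (w : ℝ → ℝ)
    (hw : ∀ ν, w ν = (ν - b * Δt) * (Real.cos ν - 1) / Real.sin ν) :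
    (∀ ν ∈ Set.Ioo (2 * n * Real.pi) ((2 * n + 1) * Real.pi),
        w (2 * (2 * n + 1) * Real.pi - ν) = w ν) ∧
    Filter.Tendsto w
      (nhdsWithin (2 * n * Real.pi) (Set.Ioi (2 * n * Real.pi))) (nhds 0) ∧
    Filter.Tendsto w
      (nhdsWithin ((2 * n + 1) * Real.pi) (Set.Iio ((2 * n + 1) * Real.pi))) (nhds 2) ∧
    StrictMonoOn w (Set.Ioo (2 * n * Real.pi) ((2 * n + 1) * Real.pi)) :=
  stmt_16_general b Δt n hbt w hw
end

section
/- Suppose μ(Q), ν(Q) are differentiable real functions satisfying μ = fΔt + γΔt − γΔt e^{−μ}cos ν and ν = gΔt + γΔt e^{−μ}sin ν at each Q, where f, g are differentiable, Δt > 0, γ < 0. If at Q = Q₀ we have μ(Q₀) = 0, ν(Q₀) = 2πn (n ∈ ℤ), f(Q₀) = 0 and g(Q₀)Δt = 2πn, then dμ/dQ(Q₀) = (Δt/(1 − γΔt))·df/dQ(Q₀). In particular dμ/dQ(Q₀) has the same sign as df/dQ(Q₀). -/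
/-!
Differentiate the real-part equation at `Q₀`. There `μ = 0` and `ν ∈ 2πℤ`, so `cos ν = 1` and
`sin ν = 0`: the `ν'` term drops out and `e^{-μ} cos ν` has derivative `-μ'`. This leaves the
linear relation `μ' = f' Δt + γ Δt μ'`, which is solved using `1 - γ Δt > 0`.
-/

open Real

lemma hasDerivAt_exp_neg_mul_cos {μ ν : ℝ → ℝ} {μ' ν' x : ℝ}
    (hμ : HasDerivAt μ μ' x) (hν : HasDerivAt ν ν' x) :
    HasDerivAt (fun Q => exp (-μ Q) * cos (ν Q))
      (exp (-μ x) * (-μ' * cos (ν x) - sin (ν x) * ν')) x :=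
  (hμ.neg.exp.mul hν.cos).congr_deriv (by simp only [Pi.neg_apply]; ring)

lemma cos_two_pi_mul_intCast (n : ℤ) : cos (2 * π * n) = 1 := by
  rw [mul_comm]
  exact cos_int_mul_two_pi n

lemma sin_two_pi_mul_intCast (n : ℤ) : sin (2 * π * n) = 0 := by
  rw [show 2 * π * n = (2 * n : ℤ) * π by push_cast; ring]
  exact sin_int_mul_pi _

theorem stmt_17_general (μ ν f : ℝ → ℝ)
    (hμ : Differentiable ℝ μ) (hν : Differentiable ℝ ν)
    (hf : Differentiable ℝ f)
    (Δt γ : ℝ) (hΔt : 0 < Δt) (hγ : γ < 0)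
    (hreal : ∀ Q, μ Q = f Q * Δt + γ * Δt - γ * Δt * Real.exp (-μ Q) * Real.cos (ν Q))
    (Q₀ : ℝ) (n : ℤ)
    (hμ0 : μ Q₀ = 0) (hν0 : ν Q₀ = 2 * Real.pi * n) :
    deriv μ Q₀ = (Δt / (1 - γ * Δt)) * deriv f Q₀ ∧
    (0 < deriv f Q₀ → 0 < deriv μ Q₀) ∧
    (deriv f Q₀ < 0 → deriv μ Q₀ < 0) := by
  have hμ_deriv : HasDerivAt (fun Q => f Q * Δt + γ * Δt - γ * Δt * (exp (-μ Q) * cos (ν Q)))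
      (deriv f Q₀ * Δt - γ * Δt *
        (exp (-μ Q₀) * (-deriv μ Q₀ * cos (ν Q₀) - sin (ν Q₀) * deriv ν Q₀))) Q₀ :=
    (((hf Q₀).hasDerivAt.mul_const Δt).add_const (γ * Δt)).sub
      ((hasDerivAt_exp_neg_mul_cos (hμ Q₀).hasDerivAt (hν Q₀).hasDerivAt).const_mul (γ * Δt))
  have hμ_eq : μ = fun Q => f Q * Δt + γ * Δt - γ * Δt * (exp (-μ Q) * cos (ν Q)) :=
    funext fun Q => (hreal Q).trans (by ring)
  rw [← hμ_eq, hμ0, hν0, cos_two_pi_mul_intCast, sin_two_pi_mul_intCast, neg_zero, exp_zero]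
    at hμ_deriv
  have hpos : 0 < 1 - γ * Δt := by nlinarith
  have hgain : 0 < Δt / (1 - γ * Δt) := div_pos hΔt hpos
  have hμ' : deriv μ Q₀ = (Δt / (1 - γ * Δt)) * deriv f Q₀ := by
    rw [div_mul_eq_mul_div, eq_div_iff hpos.ne']
    linear_combination hμ_deriv.deriv
  exact ⟨hμ', fun h => hμ' ▸ mul_pos hgain h, fun h => hμ' ▸ mul_neg_of_pos_of_neg hgain h⟩

theorem stmt_17 (μ ν f g : ℝ → ℝ)
    (hμ : Differentiable ℝ μ) (hν : Differentiable ℝ ν)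
    (hf : Differentiable ℝ f) (hg : Differentiable ℝ g)
    (Δt γ : ℝ) (hΔt : 0 < Δt) (hγ : γ < 0)
    (hreal : ∀ Q, μ Q = f Q * Δt + γ * Δt - γ * Δt * Real.exp (-μ Q) * Real.cos (ν Q))
    (himag : ∀ Q, ν Q = g Q * Δt + γ * Δt * Real.exp (-μ Q) * Real.sin (ν Q))
    (Q₀ : ℝ) (n : ℤ)
    (hμ0 : μ Q₀ = 0) (hν0 : ν Q₀ = 2 * Real.pi * n)
    (hf0 : f Q₀ = 0) (hg0 : g Q₀ * Δt = 2 * Real.pi * n) :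
    deriv μ Q₀ = (Δt / (1 - γ * Δt)) * deriv f Q₀ ∧
    (0 < deriv f Q₀ → 0 < deriv μ Q₀) ∧
    (deriv f Q₀ < 0 → deriv μ Q₀ < 0) :=
  stmt_17_general μ ν f hμ hν hf Δt γ hΔt hγ hreal Q₀ n hμ0 hν0
end
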